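/- In the bit-gadget graph, for all i, j ∈ {0,…,k−1} with i ≠ j, the hop distance satisfies dist(a^i, b^j) ≤ 3. -/

import Mathlib

/-- Vertices of the bit-gadget graph: `a i`, `b i` for `i < k`, and the
bit-nodes `fA h`, `tA h`, `fB h`, `tB h` for `h < logk`. -/
inductive BGVertex (k logk : ℕ) where
  | a (i : Fin k)
  | b (i : Fin k)
  | fA (h : Fin logk)
  | tA (h : Fin logk)
  | fB (h : Fin logk)
  | tB (h : Fin logk)
deriving DecidableEq

/-- Base relation generating the edges of the bit-gadget graph:
`a i` is adjacent to `fA h` iff the `h`-th bit of `i` is `0`, to `tA h` iff it is `1`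
(so `a i` is adjacent exactly to `bin(a i)`); similarly for `b i`; and the cross
edges `(fA h, tB h)` and `(tA h, fB h)`. -/
def bgRel (k logk : ℕ) : BGVertex k logk → BGVertex k logk → Prop
  | .a i, .fA h => i.val.testBit h.val = false
  | .a i, .tA h => i.val.testBit h.val = true
  | .b i, .fB h => i.val.testBit h.val = false
  | .b i, .tB h => i.val.testBit h.val = true
  | .fA h, .tB h' => h = h'
  | .tA h, .fB h' => h = h'
  | _, _ => False

/-- The bit-gadget graph. -/
def bgGraph (k logk : ℕ) : SimpleGraph (BGVertex k logk) :=
  SimpleGraph.fromRel (bgRel k logk)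

/-! Distinct `i, j < 2 ^ logk` differ in some bit `h < logk`. If that bit of `i` is `0` (so that
of `j` is `1`), then `a i – fA h – tB h – b j` is a path; otherwise `a i – tA h – fB h – b j` is. -/

theorem Nat.exists_lt_testBit_ne_of_lt_two_pow {m n w : ℕ} (hm : m < 2 ^ w) (hn : n < 2 ^ w)
    (hne : m ≠ n) : ∃ h < w, m.testBit h ≠ n.testBit h := by
  obtain ⟨h, hbit⟩ : ∃ h, m.testBit h ≠ n.testBit h := by
    by_contra! hall
    exact hne (Nat.eq_of_testBit_eq hall)
  refine ⟨h, ?_, hbit⟩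
  by_contra! hwh
  have hpow : 2 ^ w ≤ 2 ^ h := Nat.pow_le_pow_right two_pos hwh
  exact hbit <| (testBit_eq_false_of_lt (hm.trans_le hpow)).trans
    (testBit_eq_false_of_lt (hn.trans_le hpow)).symm

theorem SimpleGraph.edist_le_three_of_adj {V : Type*} {G : SimpleGraph V} {u v w x : V}
    (huv : G.Adj u v) (hvw : G.Adj v w) (hwx : G.Adj w x) : G.edist u x ≤ 3 :=
  (Walk.cons huv (Walk.cons hvw (Walk.cons hwx Walk.nil))).edist_le

theorem bgGraph_adj_of_bgRel {k logk : ℕ} {u v : BGVertex k logk} (hne : u ≠ v)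
    (huv : bgRel k logk u v) : (bgGraph k logk).Adj u v :=
  (SimpleGraph.fromRel_adj _ _ _).mpr ⟨hne, Or.inl huv⟩

theorem bgGraph_edist_a_b_le_three_of_testBit_ne {k logk : ℕ} (i j : Fin k) (h : Fin logk)
    (hne : (i : ℕ).testBit h ≠ (j : ℕ).testBit h) :
    (bgGraph k logk).edist (.a i) (.b j) ≤ 3 := by
  cases hi : (i : ℕ).testBit h
  · have hj : (j : ℕ).testBit h = true := by simpa [hi] using hne.symm
    exact SimpleGraph.edist_le_three_of_adj
      (bgGraph_adj_of_bgRel (u := .a i) (v := .fA h) (by simp) hi)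
      (bgGraph_adj_of_bgRel (u := .fA h) (v := .tB h) (by simp) rfl)
      (bgGraph_adj_of_bgRel (u := .b j) (v := .tB h) (by simp) hj).symm
  · have hj : (j : ℕ).testBit h = false := by simpa [hi] using hne.symm
    exact SimpleGraph.edist_le_three_of_adj
      (bgGraph_adj_of_bgRel (u := .a i) (v := .tA h) (by simp) hi)
      (bgGraph_adj_of_bgRel (u := .tA h) (v := .fB h) (by simp) rfl)
      (bgGraph_adj_of_bgRel (u := .b j) (v := .fB h) (by simp) hj).symm

theorem bitGadget_dist_a_b_le_three_general (k logk : ℕ) (hpow : k = 2 ^ logk)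
    (i j : Fin k) (hij : i ≠ j) :
    (bgGraph k logk).edist (BGVertex.a i) (BGVertex.b j) ≤ 3 := by
  subst hpow
  obtain ⟨h, hlt, hne⟩ := 
    Nat.exists_lt_testBit_ne_of_lt_two_pow i.isLt j.isLt (Fin.val_ne_of_ne hij)
  exact bgGraph_edist_a_b_le_three_of_testBit_ne i j ⟨h, hlt⟩ hne

/-- in the bit-gadget graph (for `k = 2 ^ logk`, `k ≥ 2`),
for all `i ≠ j` the hop distance between `a i` and `b j` is at most `3`. -/
theorem bitGadget_dist_a_b_le_three (k logk : ℕ) (hk : 2 ≤ k) (hpow : k = 2 ^ logk)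
    (i j : Fin k) (hij : i ≠ j) :
    (bgGraph k logk).edist (BGVertex.a i) (BGVertex.b j) ≤ 3 :=
  bitGadget_dist_a_b_le_three_general k logk hpow i j hij
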